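/- arXiv:2501.09080 — 2 statements merged into one kernel-verified Lean document; each statement's English description precedes it below -/
import Mathlib

section
/- Fix a finite state space S, a finite action space A, a reward function r : S × A → ℝ, a transition kernel p assigning to each (s,a) a probability distribution p(·|s,a) on S, a prior policy π₀ with π₀(a|s) > 0 for all (s,a), an inverse temperature β > 0, and two policies π and π'. Suppose Q : S × A → ℝ and θ ∈ ℝ satisfy the entropy-regularized average-reward Bellman equation for π: Q(s,a) = r(s,a) − θ + E_{s'∼p(·|s,a)} V(s') for all (s,a), where V(s) = E_{a∼π(·|s)} [ Q(s,a) − β⁻¹ log(π(a|s)/π₀(a|s)) ]. Suppose d' is a stationary distribution for π', i.e. for all s', d'(s') = Σ_{s∈S} d'(s) Σ_{a∈A} π'(a|s) p(s'|s,a), and define θ' = E_{s∼d', a∼π'(·|s)} [ r(s,a) − β⁻¹ log(π'(a|s)/π₀(a|s)) ]. Then the gap between the entropy-regularized reward-rates satisfies θ' − θ = E_{s∼d', a∼π'(·|s)} [ A(s,a) − β⁻¹ log(π'(a|s)/π₀(a|s)) ], where A(s,a) = Q(s,a) − V(s) is the advantage function of π. -/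
/-- ERAR Rate Gap: the gap between entropy-regularized
reward-rates of π' and π equals the expected advantage of π minus the
KL-ratio penalty, under the stationary distribution of π'. -/
theorem erar_rate_gap
    {S A : Type} [Fintype S] [Fintype A]
    (r : S → A → ℝ)
    (p : S → A → S → ℝ)
    (hp_nonneg : ∀ s a s', 0 ≤ p s a s')
    (hp_sum : ∀ s a, ∑ s', p s a s' = 1)
    (π₀ : S → A → ℝ)
    (hπ₀_pos : ∀ s a, 0 < π₀ s a)
    (hπ₀_sum : ∀ s, ∑ a, π₀ s a = 1)
    (β : ℝ) (hβ : 0 < β)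
    (π : S → A → ℝ)
    (hπ_nonneg : ∀ s a, 0 ≤ π s a)
    (hπ_sum : ∀ s, ∑ a, π s a = 1)
    (π' : S → A → ℝ)
    (hπ'_nonneg : ∀ s a, 0 ≤ π' s a)
    (hπ'_sum : ∀ s, ∑ a, π' s a = 1)
    (Q : S → A → ℝ) (θ : ℝ)
    (V : S → ℝ)
    (hV : ∀ s, V s = ∑ a, π s a * (Q s a - β⁻¹ * Real.log (π s a / π₀ s a)))
    (hBellman : ∀ s a, Q s a = r s a - θ + ∑ s', p s a s' * V s')
    (d' : S → ℝ)
    (hd'_nonneg : ∀ s, 0 ≤ d' s)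
    (hd'_sum : ∑ s, d' s = 1)
    (hd'_stat : ∀ s', d' s' = ∑ s, d' s * ∑ a, π' s a * p s a s')
    (θ' : ℝ)
    (hθ' : θ' = ∑ s, d' s * ∑ a, π' s a *
      (r s a - β⁻¹ * Real.log (π' s a / π₀ s a))) :
    θ' - θ = ∑ s, d' s * ∑ a, π' s a *
      ((Q s a - V s) - β⁻¹ * Real.log (π' s a / π₀ s a)) := by
  subst hθ'
  have key : ∑ s, d' s * ∑ a, π' s a * ∑ s', p s a s' * V s'
      = ∑ s, d' s * V s := by
    have : ∑ s, d' s * V s = ∑ s' : S, (∑ s : S, d' s * ∑ a : A, π' s a * p s a s') * V s' := by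
      refine Finset.sum_congr rfl fun s' _ => by rw [← hd'_stat s']
    rw [this]
    calc ∑ s, d' s * ∑ a, π' s a * ∑ s', p s a s' * V s'
        = ∑ s, ∑ a, ∑ s', d' s * (π' s a * (p s a s' * V s')) := by
          simp [Finset.mul_sum]
      _ = ∑ s, ∑ s', ∑ a, d' s * (π' s a * (p s a s' * V s')) :=
          Finset.sum_congr rfl fun s _ => Finset.sum_comm
      _ = ∑ s', ∑ s, ∑ a, d' s * (π' s a * (p s a s' * V s')) :=
          Finset.sum_comm
      _ = ∑ s' : S, (∑ s : S, d' s * ∑ a : A, π' s a * p s a s') * V s' := by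
          refine Finset.sum_congr rfl fun s' _ => ?_
          rw [Finset.sum_mul]
          refine Finset.sum_congr rfl fun s _ => ?_
          rw [Finset.mul_sum, Finset.sum_mul]
          exact Finset.sum_congr rfl fun a _ => by ring
  have perstate : ∀ s, ∑ a, π' s a * (r s a - β⁻¹ * Real.log (π' s a / π₀ s a))
      = (∑ a, π' s a * ((Q s a - V s) - β⁻¹ * Real.log (π' s a / π₀ s a)))
        + θ + V s - ∑ a, π' s a * ∑ s', p s a s' * V s' := by
    intro s
    have hr : ∀ a, r s a = Q s a + θ - ∑ s', p s a s' * V s' := fun a => by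
      have := hBellman s a; linarith
    calc ∑ a, π' s a * (r s a - β⁻¹ * Real.log (π' s a / π₀ s a))
        = ∑ a, (π' s a * ((Q s a - V s) - β⁻¹ * Real.log (π' s a / π₀ s a))
            + π' s a * θ + π' s a * V s - π' s a * ∑ s', p s a s' * V s') := by
          refine Finset.sum_congr rfl fun a _ => ?_
          rw [hr a]; ring
      _ = (∑ a, π' s a * ((Q s a - V s) - β⁻¹ * Real.log (π' s a / π₀ s a)))
            + (∑ a, π' s a) * θ + (∑ a, π' s a) * V s
            - ∑ a, π' s a * ∑ s', p s a s' * V s' := by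
          simp [Finset.sum_add_distrib, Finset.sum_sub_distrib, Finset.sum_mul]
      _ = _ := by rw [hπ'_sum s]; ring
  calc (∑ s, d' s * ∑ a, π' s a * (r s a - β⁻¹ * Real.log (π' s a / π₀ s a))) - θ
      = (∑ s, (d' s * ∑ a, π' s a * ((Q s a - V s) - β⁻¹ * Real.log (π' s a / π₀ s a))
          + d' s * θ + d' s * V s
          - d' s * ∑ a, π' s a * ∑ s', p s a s' * V s')) - θ := by
        refine congrArg (· - θ) (Finset.sum_congr rfl fun s _ => ?_)
        rw [perstate s]; ring
    _ = (∑ s, d' s * ∑ a, π' s a * ((Q s a - V s) - β⁻¹ * Real.log (π' s a / π₀ s a)))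
          + (∑ s, d' s) * θ + (∑ s, d' s * V s)
          - (∑ s, d' s * ∑ a, π' s a * ∑ s', p s a s' * V s') - θ := by
        simp [Finset.sum_add_distrib, Finset.sum_sub_distrib, Finset.sum_mul]
    _ = _ := by rw [hd'_sum, key]; ring
end

section
/- Fix a finite state space S, a finite action space A, a prior policy π₀ with π₀(a|s) > 0 for all (s,a), an inverse temperature β > 0, a policy π with π(a|s) > 0 for all (s,a), and a function Q : S × A → ℝ. Let V(s) = E_{a∼π(·|s)} [ Q(s,a) − β⁻¹ log(π(a|s)/π₀(a|s)) ] and let A(s,a) = Q(s,a) − V(s) be the advantage function. Then π is a fixed point of the Boltzmann improvement map, i.e. π(a|s) = π₀(a|s) e^{β Q(s,a)} / Σ_{b∈A} π₀(b|s) e^{β Q(s,b)} for all (s,a), if and only if β⁻¹ log( π(a|s) / π₀(a|s) ) = A(s,a) for all (s,a); that is, a fixed-point policy satisfies π(a|s) ∝ π₀(a|s) e^{β A(s,a)}. -/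
/-!
Put `f a = Q s a - β⁻¹ log (π s a / π₀ s a)`, so that `V s` is the `π s`-average of `f`. Both sides
of the equivalence say that `f` does not depend on `a`. The fixed-point equation says that `π s` is
proportional to `π₀ s · exp (β Q s)`, and a positive constant factor `exp (-β v)` there is the same
thing as `f ≡ v`. The advantage condition says `f a = V s` for every `a`, and since `π s` is a
probability vector this holds exactly when `f` is constant.
-/

section
open Real Finset

theorem eq_exp_neg_mul_mul_exp_iff {x y β q v : ℝ} (hx : 0 < x) (hy : 0 < y) (hβ : β ≠ 0) :
    x = exp (-(β * v)) * (y * exp (β * q)) ↔ q - β⁻¹ * log (x / y) = v := by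
  have hx_eq : y * exp (log (x / y)) = x := by
    rw [exp_log (div_pos hx hy)]
    field_simp
  have hrhs : exp (-(β * v)) * (y * exp (β * q)) = y * exp (β * (q - v)) := by
    rw [mul_sub, sub_eq_neg_add, exp_add]
    ring
  calc x = exp (-(β * v)) * (y * exp (β * q))
      ↔ y * exp (log (x / y)) = y * exp (β * (q - v)) := by rw [hx_eq, hrhs]
    _ ↔ log (x / y) = β * (q - v) := by rw [mul_right_inj' hy.ne', exp_eq_exp]
    _ ↔ q - β⁻¹ * log (x / y) = v := by
      constructor <;> intro h
      · rw [h]; field_simp; ring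
      · rw [← h]; field_simp; ring

theorem exists_eq_iff_forall_eq_sum_mul {A : Type*} [Fintype A] {p : A → ℝ}
    (hp : ∑ a, p a = 1) (f : A → ℝ) :
    (∃ v, ∀ a, f a = v) ↔ ∀ a, f a = ∑ b, p b * f b := by
  refine ⟨fun ⟨v, hv⟩ a => ?_, fun h => ⟨_, h⟩⟩
  simp only [hv, ← sum_mul, hp, one_mul]

theorem forall_eq_div_sum_iff_exists_pos_mul {A : Type*} [Fintype A] {p w : A → ℝ}
    (hw : ∀ a, 0 ≤ w a) (hp : ∑ a, p a = 1) :
    (∀ a, p a = w a / ∑ b, w b) ↔ ∃ c > 0, ∀ a, p a = c * w a := by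
  constructor
  · intro h
    have hsum : (∑ b, w b) / ∑ b, w b = 1 := by
      rw [← hp, sum_div]
      exact sum_congr rfl fun a _ => (h a).symm
    have hsum_pos : 0 < ∑ b, w b :=
      (sum_nonneg fun a _ => hw a).lt_of_ne (by rintro h0; simp [← h0] at hsum)
    exact ⟨(∑ b, w b)⁻¹, inv_pos.mpr hsum_pos, fun a => by rw [h a, div_eq_inv_mul]⟩
  · rintro ⟨c, -, hc⟩ a
    have hcw : c * ∑ b, w b = 1 := by
      rw [mul_sum, ← hp]
      exact sum_congr rfl fun b _ => (hc b).symm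
    rw [hc a, eq_div_iff (right_ne_zero_of_mul_eq_one hcw)]
    linear_combination w a * hcw

theorem exists_pos_mul_iff_exists_sub_log_eq {A : Type*} {p p₀ q : A → ℝ} {β : ℝ}
    (hp : ∀ a, 0 < p a) (hp₀ : ∀ a, 0 < p₀ a) (hβ : β ≠ 0) :
    (∃ c > 0, ∀ a, p a = c * (p₀ a * exp (β * q a))) ↔
      ∃ v, ∀ a, q a - β⁻¹ * log (p a / p₀ a) = v := by
  simp only [← eq_exp_neg_mul_mul_exp_iff (hp _) (hp₀ _) hβ]
  constructor
  · rintro ⟨c, hc, h⟩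
    refine ⟨-(β⁻¹ * log c), fun a => ?_⟩
    rw [mul_neg, neg_neg, mul_inv_cancel_left₀ hβ, exp_log hc]
    exact h a
  · rintro ⟨v, h⟩
    exact ⟨_, exp_pos _, h⟩

end

theorem boltzmann_fixed_point_iff_advantage_general
    {S A : Type} [Fintype A]
    (π₀ : S → A → ℝ)
    (hπ₀_pos : ∀ s a, 0 < π₀ s a)
    (β : ℝ) (hβ : 0 < β)
    (π : S → A → ℝ)
    (hπ_pos : ∀ s a, 0 < π s a)
    (hπ_sum : ∀ s, ∑ a, π s a = 1)
    (Q : S → A → ℝ)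
    (V : S → ℝ)
    (hV : ∀ s, V s = ∑ a, π s a * (Q s a - β⁻¹ * Real.log (π s a / π₀ s a)))
    (Adv : S → A → ℝ)
    (hAdv : ∀ s a, Adv s a = Q s a - V s) :
    (∀ s a, π s a =
        π₀ s a * Real.exp (β * Q s a) / ∑ b, π₀ s b * Real.exp (β * Q s b))
    ↔
    (∀ s a, β⁻¹ * Real.log (π s a / π₀ s a) = Adv s a) := by
  refine forall_congr' fun s => ?_
  have hweight : ∀ a, 0 ≤ π₀ s a * Real.exp (β * Q s a) :=
    fun a => (mul_pos (hπ₀_pos s a) (Real.exp_pos _)).le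
  rw [forall_eq_div_sum_iff_exists_pos_mul hweight (hπ_sum s),
    exists_pos_mul_iff_exists_sub_log_eq (hπ_pos s) (hπ₀_pos s) hβ.ne',
    exists_eq_iff_forall_eq_sum_mul (hπ_sum s), ← hV s]
  refine forall_congr' fun a => ?_
  rw [hAdv s a]
  constructor <;> intro h <;> linarith

/-- a policy π is a fixed point of the Boltzmann improvement map
iff its log-ratio to the prior equals the advantage function, i.e.
π(a|s) ∝ π₀(a|s) e^{β A(s,a)}. -/
theorem boltzmann_fixed_point_iff_advantage
    {S A : Type} [Fintype S] [Fintype A] [Nonempty A]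
    (π₀ : S → A → ℝ)
    (hπ₀_pos : ∀ s a, 0 < π₀ s a)
    (hπ₀_sum : ∀ s, ∑ a, π₀ s a = 1)
    (β : ℝ) (hβ : 0 < β)
    (π : S → A → ℝ)
    (hπ_pos : ∀ s a, 0 < π s a)
    (hπ_sum : ∀ s, ∑ a, π s a = 1)
    (Q : S → A → ℝ)
    (V : S → ℝ)
    (hV : ∀ s, V s = ∑ a, π s a * (Q s a - β⁻¹ * Real.log (π s a / π₀ s a)))
    (Adv : S → A → ℝ)
    (hAdv : ∀ s a, Adv s a = Q s a - V s) :
    (∀ s a, π s a =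
        π₀ s a * Real.exp (β * Q s a) / ∑ b, π₀ s b * Real.exp (β * Q s b))
    ↔
    (∀ s a, β⁻¹ * Real.log (π s a / π₀ s a) = Adv s a) :=
  boltzmann_fixed_point_iff_advantage_general π₀ hπ₀_pos β hβ π hπ_pos hπ_sum Q V hV Adv hAdv
end
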